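/- arXiv:1411.5079 — 2 statements merged into one kernel-verified Lean document; each statement's English description precedes it below -/
import Mathlib

section
/- If X is a Hilbertian operator space and Y a closed subspace of X, then the quotient operator space Min(X)/Y is completely isometrically isomorphic to Min(X/Y); in particular every quotient of a minimal Hilbertian operator space is minimal. -/
noncomputable section

namespace OSP

/-- A sequence of matrix norms (as bare functions) on a type `X`. -/
abbrev MatNorms (X : Type) : Type := ∀ n : ℕ, Matrix (Fin n) (Fin n) X → ℝ

/-- The operator norm of a scalar matrix, viewed as an operator on Euclidean space. -/
def scNorm {m : Type} [Fintype m] [DecidableEq m] (A : Matrix m m ℂ) : ℝ :=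
  ‖Matrix.toEuclideanCLM (𝕜 := ℂ) (n := m) A‖

/-- The two-sided scalar multiplication `a · x · b` of a matrix over `X` by scalar matrices. -/
def smulMat {X : Type} [AddCommGroup X] [Module ℂ X] {n : ℕ}
    (a : Matrix (Fin n) (Fin n) ℂ) (x : Matrix (Fin n) (Fin n) X)
    (b : Matrix (Fin n) (Fin n) ℂ) : Matrix (Fin n) (Fin n) X :=
  Matrix.of fun i j => ∑ k, ∑ l, (a i k * b l j) • x k l

/-- An (admissible, abstract) operator space structure on a normed space `X`:
a sequence of matrix norms satisfying Ruan's axioms whose first level is the norm of `X`. -/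
structure OSS (X : Type) [NormedAddCommGroup X] [NormedSpace ℂ X] where
  N : MatNorms X
  nonneg : ∀ n x, 0 ≤ N n x
  add_le : ∀ n (x y : Matrix (Fin n) (Fin n) X), N n (x + y) ≤ N n x + N n y
  smul_eq : ∀ n (c : ℂ) (x : Matrix (Fin n) (Fin n) X), N n (c • x) = ‖c‖ * N n x
  eq_zero : ∀ n (x : Matrix (Fin n) (Fin n) X), N n x = 0 → x = 0
  level_one : ∀ x : X, N 1 (Matrix.of fun _ _ => x) = ‖x‖
  ruan_mul : ∀ n (a b : Matrix (Fin n) (Fin n) ℂ) (x : Matrix (Fin n) (Fin n) X),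
    N n (smulMat a x b) ≤ scNorm a * N n x * scNorm b
  ruan_block : ∀ (n m : ℕ) (x : Matrix (Fin n) (Fin n) X) (y : Matrix (Fin m) (Fin m) X),
    N (n + m) ((Matrix.fromBlocks x 0 0 y).submatrix finSumFinEquiv.symm finSumFinEquiv.symm)
      = max (N n x) (N m y)

/-- A bundled operator space. -/
structure OpSpace where
  carrier : Type
  [grp : NormedAddCommGroup carrier]
  [mod : NormedSpace ℂ carrier]
  str : OSS carrier

attribute [instance] OpSpace.grp OpSpace.mod

/-- `f` amplifies with bound `C` at all matrix levels. -/
def ampBound {X Y : Type} (NX : MatNorms X) (NY : MatNorms Y) (f : X → Y) (C : ℝ) : Prop :=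
  ∀ n (x : Matrix (Fin n) (Fin n) X), NY n (x.map f) ≤ C * NX n x

/-- `f` is completely bounded. -/
def CompletelyBounded {X Y : Type} (NX : MatNorms X) (NY : MatNorms Y) (f : X → Y) : Prop :=
  ∃ C, 0 ≤ C ∧ ampBound NX NY f C

/-- The completely bounded norm of `f`. -/
def cbNorm {X Y : Type} (NX : MatNorms X) (NY : MatNorms Y) (f : X → Y) : ℝ :=
  sInf {C | 0 ≤ C ∧ ampBound NX NY f C}

/-- The matrix norms of the minimal operator space structure `Min X`. -/
def minN (X : Type) [NormedAddCommGroup X] [NormedSpace ℂ X] : MatNorms X :=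
  fun n x => sSup {r | ∃ f : X →L[ℂ] ℂ, ‖f‖ ≤ 1 ∧ r = scNorm (x.map ⇑f)}

/-- The matrix norms of the maximal operator space structure `Max X`. -/
def maxN (X : Type) [NormedAddCommGroup X] [NormedSpace ℂ X] : MatNorms X :=
  fun n x => sSup {r | ∃ (Z : OpSpace) (u : X →L[ℂ] Z.carrier), ‖u‖ ≤ 1 ∧ r = Z.str.N n (x.map ⇑u)}

/-- The inherited (subspace) matrix norms on a submodule. -/
def subN {X : Type} [NormedAddCommGroup X] [NormedSpace ℂ X]
    (NX : MatNorms X) (Y : Submodule ℂ X) : MatNorms Y :=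
  fun n x => NX n (x.map ⇑Y.subtype)

/-- The quotient matrix norms on `X ⧸ Y`. -/
def quotN {X : Type} [NormedAddCommGroup X] [NormedSpace ℂ X]
    (NX : MatNorms X) (Y : Submodule ℂ X) : MatNorms (X ⧸ Y) :=
  fun n z => sInf {r | ∃ x : Matrix (Fin n) (Fin n) X, x.map ⇑Y.mkQ = z ∧ r = NX n x}

/-- The canonical operator space matrix norms on `M_d(ℂ)`. -/
def MnN (d : ℕ) : MatNorms (Matrix (Fin d) (Fin d) ℂ) :=
  fun n x => scNorm (Matrix.of fun p q : Fin n × Fin d => x p.1 q.1 p.2 q.2)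

/-- The dual matrix norms on `X* = X →L[ℂ] ℂ`, via `M_n(X*) = CB(X, M_n)`. -/
def dualN {X : Type} [NormedAddCommGroup X] [NormedSpace ℂ X] (NX : MatNorms X) :
    MatNorms (X →L[ℂ] ℂ) :=
  fun n F => cbNorm NX (MnN n) (fun x => Matrix.of fun i j => F i j x)

/-- The annihilator `Y⊥` of a subspace `Y ⊆ X` inside the dual `X*`. -/
def ann {X : Type} [NormedAddCommGroup X] [NormedSpace ℂ X] (Y : Submodule ℂ X) :
    Submodule ℂ (X →L[ℂ] ℂ) where
  carrier := {f | ∀ y ∈ Y, f y = 0}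
  add_mem' := by intro f g hf hg y hy; simp [hf y hy, hg y hy]
  zero_mem' := by intro y hy; simp
  smul_mem' := by intro c f hf y hy; simp [hf y hy]

/-- A complete quotient map: every amplification maps the open unit ball onto the open unit ball. -/
def CompleteQuotientMap {X Z : Type} (NX : MatNorms X) (NZ : MatNorms Z) (f : X → Z) : Prop :=
  ∀ n, (fun x : Matrix (Fin n) (Fin n) X => x.map f) '' {x | NX n x < 1} = {z | NZ n z < 1}

end OSP


/-!
In a Hilbertian space the orthogonal projection onto `Yᗮ` descends to a contractive linear section
`s` of the quotient map `q : X → X/Y`. Contractions contract the `Min` matrix norms, because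
composing with them pulls back functionals of norm at most one. Applied to `q`, this bounds the
`Min(X/Y)`-norm of `z` by the `Min(X)`-norm of each of its lifts; applied to `s`, it shows that the
lift `s(z)` attains this bound.
-/

namespace OSP

open ContinuousLinearMap

theorem _root_.EuclideanSpace.norm_le_sum_norm {𝕜 m : Type*} [RCLike 𝕜] [Fintype m]
    (w : EuclideanSpace 𝕜 m) : ‖w‖ ≤ ∑ i, ‖w i‖ := by
  rw [EuclideanSpace.norm_eq, Real.sqrt_le_iff]
  exact ⟨by positivity, Finset.sum_sq_le_sq_sum_of_nonneg fun _ _ => norm_nonneg _⟩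

lemma scNorm_le_sum_norm {m : Type} [Fintype m] [DecidableEq m] (A : Matrix m m ℂ) :
    scNorm A ≤ ∑ i, ∑ j, ‖A i j‖ := by
  refine opNorm_le_bound _ (by positivity) fun v => ?_
  calc ‖Matrix.toEuclideanCLM (𝕜 := ℂ) A v‖ ≤ ∑ i, ‖∑ j, A i j * v j‖ :=
        EuclideanSpace.norm_le_sum_norm _
    _ ≤ ∑ i, ∑ j, ‖A i j‖ * ‖v‖ := by
        gcongr with i
        refine (norm_sum_le _ _).trans (Finset.sum_le_sum fun j _ => ?_)
        rw [norm_mul]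
        gcongr
        exact PiLp.norm_apply_le v j
    _ = (∑ i, ∑ j, ‖A i j‖) * ‖v‖ := by simp only [Finset.sum_mul]

section MinNorm

variable {W V : Type} [NormedAddCommGroup W] [NormedSpace ℂ W]
  [NormedAddCommGroup V] [NormedSpace ℂ V] {n : ℕ}

lemma zero_mem_minN_set (x : Matrix (Fin n) (Fin n) W) :
    (0 : ℝ) ∈ {r | ∃ f : W →L[ℂ] ℂ, ‖f‖ ≤ 1 ∧ r = scNorm (x.map ⇑f)} := by
  refine ⟨0, by simp, ?_⟩
  rw [show x.map ⇑(0 : W →L[ℂ] ℂ) = 0 by ext; rfl, scNorm, map_zero, norm_zero]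

lemma bddAbove_minN_set (x : Matrix (Fin n) (Fin n) W) :
    BddAbove {r | ∃ f : W →L[ℂ] ℂ, ‖f‖ ≤ 1 ∧ r = scNorm (x.map ⇑f)} := by
  refine ⟨∑ i, ∑ j, ‖x i j‖, ?_⟩
  rintro _ ⟨f, hf, rfl⟩
  refine (scNorm_le_sum_norm _).trans
    (Finset.sum_le_sum fun i _ => Finset.sum_le_sum fun j _ => ?_)
  simpa using f.le_of_opNorm_le hf (x i j)

lemma minN_nonneg (x : Matrix (Fin n) (Fin n) W) : 0 ≤ minN W n x :=
  le_csSup (bddAbove_minN_set x) (zero_mem_minN_set x)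

lemma minN_map_le (T : W →L[ℂ] V) (hT : ‖T‖ ≤ 1) (x : Matrix (Fin n) (Fin n) W) :
    minN V n (x.map T) ≤ minN W n x := by
  refine csSup_le ⟨0, zero_mem_minN_set _⟩ ?_
  rintro _ ⟨g, hg, rfl⟩
  refine le_csSup (bddAbove_minN_set x) ⟨g ∘L T, ?_, by rw [Matrix.map_map]; rfl⟩
  simpa using (opNorm_comp_le g T).trans (mul_le_one₀ hg (norm_nonneg T) hT)

end MinNorm

section Quotient

variable {W : Type} [NormedAddCommGroup W] [NormedSpace ℂ W] (Y : Submodule ℂ W)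

theorem _root_.Submodule.norm_mkQL_le : ‖Y.mkQL‖ ≤ 1 :=
  opNorm_le_bound _ zero_le_one fun x => by simpa using Submodule.Quotient.norm_mk_le Y x

lemma exists_section_mkQ_of_proj (P : W →L[ℂ] W) (hP : ‖P‖ ≤ 1) (hPY : ∀ y ∈ Y, P y = 0)
    (hsub : ∀ x, x - P x ∈ Y) :
    ∃ s : W ⧸ Y →L[ℂ] W, ‖s‖ ≤ 1 ∧ ∀ q, Y.mkQ (s q) = q := by
  refine ⟨Y.liftQL P hPY, opNorm_le_bound _ zero_le_one fun q => ?_, fun q => ?_⟩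
  · rw [one_mul]
    refine le_of_forall_pos_le_add fun ε hε => ?_
    obtain ⟨x, rfl, hx⟩ := Submodule.Quotient.norm_mk_lt q hε
    calc ‖P x‖ ≤ ‖x‖ := by simpa using P.le_of_opNorm_le hP x
      _ ≤ _ := hx.le
  · obtain ⟨x, rfl⟩ := Y.mkQ_surjective q
    exact (Submodule.Quotient.eq Y).2 (sub_mem_comm_iff.1 (hsub x))

lemma quotN_minN_eq_of_section [IsClosed (Y : Set W)] (s : W ⧸ Y →L[ℂ] W) (hs : ‖s‖ ≤ 1)
    (hsec : ∀ q, Y.mkQ (s q) = q) {n : ℕ} (z : Matrix (Fin n) (Fin n) (W ⧸ Y)) :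
    quotN (minN W) Y n z = minN (W ⧸ Y) n z := by
  have hlift : (z.map s).map Y.mkQ = z := by ext; simp [hsec]
  refine le_antisymm ?_ ?_
  · calc quotN (minN W) Y n z ≤ minN W n (z.map s) :=
          csInf_le ⟨0, by rintro _ ⟨x, -, rfl⟩; exact minN_nonneg x⟩ ⟨_, hlift, rfl⟩
      _ ≤ minN (W ⧸ Y) n z := minN_map_le s hs z
  · refine le_csInf ⟨_, _, hlift, rfl⟩ ?_
    rintro _ ⟨x, rfl, rfl⟩
    exact minN_map_le Y.mkQL Y.norm_mkQL_le x

end Quotient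

lemma exists_proj_of_linearIsometryEquiv {X H : Type} [NormedAddCommGroup X] [NormedSpace ℂ X]
    [NormedAddCommGroup H] [InnerProductSpace ℂ H] [CompleteSpace H]
    (e : X ≃ₗᵢ[ℂ] H) (Y : Submodule ℂ X) [hY : IsClosed (Y : Set X)] :
    ∃ P : X →L[ℂ] X, ‖P‖ ≤ 1 ∧ (∀ y ∈ Y, P y = 0) ∧ ∀ x, x - P x ∈ Y := by
  set K : Submodule ℂ H := Y.comap (e.symm.toLinearEquiv : H →ₗ[ℂ] X)
  have : CompleteSpace K := (hY.preimage e.symm.continuous).completeSpace_coe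
  refine ⟨(e.symm : H →L[ℂ] X) ∘L Kᗮ.starProjection ∘L (e : X →L[ℂ] H),
    opNorm_le_bound _ zero_le_one fun x => ?_, fun y hy => ?_, fun x => ?_⟩
  · simpa only [one_mul, comp_apply, ContinuousLinearEquiv.coe_coe,
      LinearIsometryEquiv.coe_toContinuousLinearEquiv,
      LinearIsometryEquiv.coe_symm_toContinuousLinearEquiv, LinearIsometryEquiv.norm_map]
      using Kᗮ.norm_starProjection_apply_le (e x)
  · have : e y ∈ K := by simpa [K] using hy
    simp [Submodule.starProjection_orthogonal_apply_eq_zero this]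
  · have : e.symm (K.starProjection (e x)) ∈ Y := K.starProjection_apply_mem (e x)
    simpa [Submodule.starProjection_orthogonal'] using this

end OSP

/-- if `X` is Hilbertian (isometric to a Hilbert space) and `Y ⊆ X` is a
closed subspace, then `Min(X)/Y = Min(X/Y)` completely isometrically. -/
theorem stmt13 (X : Type) [NormedAddCommGroup X] [NormedSpace ℂ X]
    (H : Type) [NormedAddCommGroup H] [InnerProductSpace ℂ H] [CompleteSpace H]
    (e : X ≃ₗᵢ[ℂ] H)
    (Y : Submodule ℂ X) [IsClosed (Y : Set X)] :
    ∀ (n : ℕ) (z : Matrix (Fin n) (Fin n) (X ⧸ Y)),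
      OSP.quotN (OSP.minN X) Y n z = OSP.minN (X ⧸ Y) n z := by
  obtain ⟨P, hP, hPY, hsub⟩ := OSP.exists_proj_of_linearIsometryEquiv e Y
  obtain ⟨s, hs, hsec⟩ := OSP.exists_section_mkQ_of_proj Y P hP hPY hsub
  exact fun n z => OSP.quotN_minN_eq_of_section Y s hs hsec z
end
end

section
/- Let X be an infinite dimensional operator space. If every finite dimensional subspace of X, with the inherited matrix norms, is a maximal operator space, then X is maximal. -/
noncomputable section

namespace OSP

variable {X : Type} [NormedAddCommGroup X] [NormedSpace ℂ X]

/-- The quotient map `X → X ⧸ Y` as a continuous linear map. -/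
def mkQCLM (Y : Submodule ℂ X) [IsClosed (Y : Set X)] : X →L[ℂ] X ⧸ Y :=
  Y.mkQ.mkContinuous 1 fun x => by
    simpa using Submodule.Quotient.norm_mk_le Y x

/-- Precomposition with the quotient map: the canonical embedding `(X/Y)* → X*`,
whose range is the annihilator `Y⊥`. -/
def pullQ (Y : Submodule ℂ X) [IsClosed (Y : Set X)] :
    ((X ⧸ Y) →L[ℂ] ℂ) →ₗ[ℂ] (X →L[ℂ] ℂ) where
  toFun f := f.comp (mkQCLM Y)
  map_add' := by intro f g; ext x; simp
  map_smul' := by intro c f; ext x; simp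

/-- The restriction map `X* → Y*`. -/
def resMap (Y : Submodule ℂ X) : (X →L[ℂ] ℂ) →ₗ[ℂ] (Y →L[ℂ] ℂ) where
  toFun f := f.comp Y.subtypeL
  map_add' := by intro f g; ext x; simp
  map_smul' := by intro c f; ext x; simp

theorem ann_le_ker_resMap (Y : Submodule ℂ X) : ann Y ≤ LinearMap.ker (resMap Y) := by
  intro f hf
  simp only [LinearMap.mem_ker]
  ext y
  exact hf y y.2

/-- The canonical map `X*/Y⊥ → Y*` induced by restriction. -/
def resQbar (Y : Submodule ℂ X) : ((X →L[ℂ] ℂ) ⧸ ann Y) →ₗ[ℂ] (Y →L[ℂ] ℂ) :=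
  (ann Y).liftQ (resMap Y) (ann_le_ker_resMap Y)

end OSP

/-! Ruan's axioms bound every matrix norm of an operator space by the sum of the norms of the
entries, so the supremum defining `maxN` is finite and dominates `os.N`. Conversely, a
contraction `u : X → Z` restricts to a contraction on the finite dimensional span `E` of the
entries of `x`, whence `Z.N (u x) ≤ maxN E x = os.N x`. -/

namespace OSP

section Ruan

variable {Z : Type} [NormedAddCommGroup Z] [NormedSpace ℂ Z]

theorem OSS.N_zero (N : OSS Z) (n : ℕ) : N.N n 0 = 0 := by
  simpa using N.smul_eq n 0 0

theorem scNorm_single_one_le {n : ℕ} (i j : Fin n) :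
    scNorm (Matrix.single i j (1 : ℂ)) ≤ 1 := by
  refine ContinuousLinearMap.opNorm_le_bound _ zero_le_one fun x => ?_
  have hx : Matrix.toEuclideanCLM (𝕜 := ℂ) (Matrix.single i j (1 : ℂ)) x
      = EuclideanSpace.single i (x j) := by
    ext p
    change (WithLp.ofLp (Matrix.toEuclideanCLM (𝕜 := ℂ) (Matrix.single i j (1 : ℂ)) x)) p = _
    rw [Matrix.ofLp_toEuclideanCLM, Matrix.single_mulVec]
    rcases eq_or_ne p i with rfl | hp
    · simp
    · simp [Function.update, hp]
  rw [hx, PiLp.norm_single, one_mul]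
  exact PiLp.norm_apply_le x j

theorem smulMat_single_single {X : Type} [AddCommGroup X] [Module ℂ X] {n : ℕ}
    (w : Matrix (Fin n) (Fin n) X) (i j k l : Fin n) :
    smulMat (Matrix.single k i 1) w (Matrix.single j l 1) = Matrix.single k l (w i j) := by
  ext p q
  by_cases hk : k = p <;> by_cases hl : l = q <;> simp [smulMat, Matrix.single_apply, hk, hl]

theorem OSS.exists_corner_eq_N_eq_norm (N : OSS Z) (m : ℕ) (v : Z) :
    ∃ w : Matrix (Fin (1 + m)) (Fin (1 + m)) Z, w 0 0 = v ∧ N.N (1 + m) w = ‖v‖ := by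
  refine ⟨(Matrix.fromBlocks (Matrix.of fun _ _ => v) 0 0 0).submatrix
    finSumFinEquiv.symm finSumFinEquiv.symm, ?_, ?_⟩
  · have h0 : finSumFinEquiv.symm (0 : Fin (1 + m)) = Sum.inl 0 :=
      finSumFinEquiv_symm_apply_castAdd (0 : Fin 1)
    simp [h0]
  · rw [N.ruan_block, N.level_one, N.N_zero, max_eq_left (norm_nonneg v)]

theorem OSS.N_single_le (N : OSS Z) {n : ℕ} (k l : Fin n) (v : Z) :
    N.N n (Matrix.single k l v) ≤ ‖v‖ := by
  obtain ⟨m, rfl⟩ : ∃ m, n = 1 + m := ⟨n - 1, by have := k.pos; omega⟩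
  obtain ⟨w, hw0, hw⟩ := N.exists_corner_eq_N_eq_norm m v
  calc N.N (1 + m) (Matrix.single k l v)
      = N.N (1 + m) (smulMat (Matrix.single k 0 1) w (Matrix.single 0 l 1)) := by
        rw [smulMat_single_single, hw0]
    _ ≤ scNorm (Matrix.single k 0 (1 : ℂ)) * N.N (1 + m) w *
          scNorm (Matrix.single 0 l (1 : ℂ)) := N.ruan_mul _ _ _ _
    _ ≤ 1 * N.N (1 + m) w * 1 := by
        have hN := N.nonneg (1 + m) w
        exact mul_le_mul (mul_le_mul_of_nonneg_right (scNorm_single_one_le k 0) hN)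
          (scNorm_single_one_le 0 l) (norm_nonneg _) (by positivity)
    _ = ‖v‖ := by rw [hw, one_mul, mul_one]

theorem OSS.N_sum_le (N : OSS Z) (n : ℕ) {ι : Type} (s : Finset ι)
    (f : ι → Matrix (Fin n) (Fin n) Z) : N.N n (∑ p ∈ s, f p) ≤ ∑ p ∈ s, N.N n (f p) :=
  Finset.le_sum_of_subadditive (N.N n) (N.N_zero n).le (N.add_le n) s f

theorem OSS.N_le_sum_norm (N : OSS Z) (n : ℕ) (y : Matrix (Fin n) (Fin n) Z) :
    N.N n y ≤ ∑ k, ∑ l, ‖y k l‖ := by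
  conv_lhs => rw [Matrix.matrix_eq_sum_single y]
  calc N.N n (∑ k, ∑ l, Matrix.single k l (y k l))
      ≤ ∑ k, N.N n (∑ l, Matrix.single k l (y k l)) := N.N_sum_le n _ _
    _ ≤ ∑ k, ∑ l, N.N n (Matrix.single k l (y k l)) :=
        Finset.sum_le_sum fun k _ => N.N_sum_le n _ _
    _ ≤ ∑ k, ∑ l, ‖y k l‖ :=
        Finset.sum_le_sum fun k _ => Finset.sum_le_sum fun l _ => N.N_single_le k l _

end Ruan

section Max

variable {X : Type} [NormedAddCommGroup X] [NormedSpace ℂ X]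

theorem maxN_bddAbove (n : ℕ) (x : Matrix (Fin n) (Fin n) X) :
    BddAbove {r | ∃ (Z : OpSpace) (u : X →L[ℂ] Z.carrier),
      ‖u‖ ≤ 1 ∧ r = Z.str.N n (x.map ⇑u)} := by
  refine ⟨∑ k, ∑ l, ‖x k l‖, ?_⟩
  rintro r ⟨Z, u, hu, rfl⟩
  refine (Z.str.N_le_sum_norm n _).trans <|
    Finset.sum_le_sum fun k _ => Finset.sum_le_sum fun l _ => ?_
  exact u.le_of_opNorm_le hu (x k l) |>.trans_eq (one_mul _)

theorem N_map_le_maxN (Z : OpSpace) (u : X →L[ℂ] Z.carrier) (hu : ‖u‖ ≤ 1) (n : ℕ)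
    (x : Matrix (Fin n) (Fin n) X) : Z.str.N n (x.map u) ≤ maxN X n x :=
  le_csSup (maxN_bddAbove n x) ⟨Z, u, hu, rfl⟩

theorem OSS.N_le_maxN (os : OSS X) (n : ℕ) (x : Matrix (Fin n) (Fin n) X) :
    os.N n x ≤ maxN X n x :=
  N_map_le_maxN ⟨X, os⟩ (ContinuousLinearMap.id ℂ X) ContinuousLinearMap.norm_id_le n x

theorem maxN_map_le {E : Type} [NormedAddCommGroup E] [NormedSpace ℂ E] (T : E →L[ℂ] X)
    (hT : ‖T‖ ≤ 1) (n : ℕ) (x : Matrix (Fin n) (Fin n) E) :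
    maxN X n (x.map T) ≤ maxN E n x := by
  have hmax_nonneg : 0 ≤ maxN E n x :=
    Real.sSup_nonneg fun _ ⟨Z, _, _, hr⟩ => hr ▸ Z.str.nonneg n _
  refine Real.sSup_le ?_ hmax_nonneg
  rintro r ⟨Z, u, hu, rfl⟩
  have hcomp : ‖u.comp T‖ ≤ 1 :=
    (u.opNorm_comp_le T).trans (mul_le_one₀ hu (norm_nonneg T) hT)
  rw [Matrix.map_map]
  exact N_map_le_maxN Z (u.comp T) hcomp n x

theorem exists_finiteDimensional_matrix_lift {n : ℕ} (x : Matrix (Fin n) (Fin n) X) :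
    ∃ (E : Submodule ℂ X) (_ : FiniteDimensional ℂ E) (y : Matrix (Fin n) (Fin n) E),
      y.map E.subtype = x :=
  ⟨Submodule.span ℂ (Set.range fun p : Fin n × Fin n => x p.1 p.2),
    FiniteDimensional.span_of_finite ℂ (Set.finite_range _),
    Matrix.of fun i j => ⟨x i j, Submodule.subset_span ⟨(i, j), rfl⟩⟩, rfl⟩

end Max

end OSP

theorem stmt15_general (X : Type) [NormedAddCommGroup X] [NormedSpace ℂ X] (os : OSP.OSS X)
    (hmax : ∀ E : Submodule ℂ X, FiniteDimensional ℂ E →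
      ∀ (n : ℕ) (x : Matrix (Fin n) (Fin n) E),
        OSP.subN os.N E n x = OSP.maxN E n x) :
    ∀ (n : ℕ) (x : Matrix (Fin n) (Fin n) X), os.N n x = OSP.maxN X n x := by
  intro n x
  obtain ⟨E, hE, y, rfl⟩ := OSP.exists_finiteDimensional_matrix_lift x
  refine le_antisymm (os.N_le_maxN n _) ?_
  calc OSP.maxN X n (y.map E.subtype)
      ≤ OSP.maxN E n y := OSP.maxN_map_le E.subtypeL (Submodule.norm_subtypeL_le E) n y
    _ = OSP.subN os.N E n y := (hmax E hE n y).symm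
    _ = os.N n (y.map E.subtype) := rfl

/-- if `X` is an infinite dimensional operator space all of whose finite
dimensional subspaces (with the inherited matrix norms) are maximal, then `X` is maximal. -/
theorem stmt15 (X : Type) [NormedAddCommGroup X] [NormedSpace ℂ X] (os : OSP.OSS X)
    (hinf : ¬ FiniteDimensional ℂ X)
    (hmax : ∀ E : Submodule ℂ X, FiniteDimensional ℂ E →
      ∀ (n : ℕ) (x : Matrix (Fin n) (Fin n) E),
        OSP.subN os.N E n x = OSP.maxN E n x) :
    ∀ (n : ℕ) (x : Matrix (Fin n) (Fin n) X), os.N n x = OSP.maxN X n x :=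
  stmt15_general X os hmax
end
end
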